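/- arXiv:2107.07923 — 2 statements merged into one kernel-verified Lean document; each statement's English description precedes it below -/
import Mathlib

section
/- Let ε ≥ 0, n ∈ ℕ, let W be a finite nonempty vocabulary with a binary embedding φ : W → {0,1}^n, and let nn : {0,1}^n → W be any (deterministic) nearest-neighbor retrieval function. Define the BRR mechanism on input w ∈ W as: apply bitwise randomized response with parameter ε to φ(w) (each bit kept with probability e^ε/(1+e^ε), flipped with probability 1/(1+e^ε), independently), obtaining a random vector v ∈ {0,1}^n, and output nn(v) ∈ W. Then BRR is ε·d-differentially private for the metric d(w,w') = H(φ(w), φ(w')), the Hamming distance between the binary embeddings: for all w, w' ∈ W and all ŵ ∈ W, Pr[BRR(w) = ŵ] ≤ e^(ε·H(φ(w),φ(w'))) · Pr[BRR(w') = ŵ]. -/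
/-- The BRR mechanism (bitwise randomized response on binary
embeddings followed by deterministic nearest-neighbor retrieval) is
ε·d-differentially private for d(w,w') = Hamming distance of the embeddings. -/
theorem brr_metric_dp
    (n : ℕ) (ε : ℝ) (hε : 0 ≤ ε)
    (W : Type*) [Fintype W] [Nonempty W]
    (φ : W → (Fin n → Bool)) (nn : (Fin n → Bool) → W)
    (RRvec : (Fin n → Bool) → PMF (Fin n → Bool))
    (hRR : ∀ v y : Fin n → Bool,
      RRvec v y = ∏ i : Fin n,
        (if v i = y i then ENNReal.ofReal (Real.exp ε / (1 + Real.exp ε))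
         else ENNReal.ofReal (1 / (1 + Real.exp ε))))
    (BRR : W → PMF W)
    (hBRR : ∀ w : W, BRR w = (RRvec (φ w)).map nn) :
    ∀ (w w' wHat : W),
      BRR w wHat ≤
        ENNReal.ofReal (Real.exp (ε * (hammingDist (φ w) (φ w') : ℝ))) * BRR w' wHat := by
  intro w w' wHat
  set a : ENNReal := ENNReal.ofReal (Real.exp ε / (1 + Real.exp ε)) with ha
  set b : ENNReal := ENNReal.ofReal (1 / (1 + Real.exp ε)) with hb
  set c : ENNReal := ENNReal.ofReal (Real.exp ε) with hc
  have hexp1 : (1 : ℝ) ≤ Real.exp ε := Real.one_le_exp hε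
  have hden : (0 : ℝ) < 1 + Real.exp ε := by positivity
  -- a ≤ c * b and b ≤ c * a
  have hab : a ≤ c * b := by
    rw [ha, hb, hc, ← ENNReal.ofReal_mul (Real.exp_nonneg ε)]
    apply ENNReal.ofReal_le_ofReal
    rw [mul_one_div]
  have hba : b ≤ c * a := by
    rw [ha, hb, hc, ← ENNReal.ofReal_mul (Real.exp_nonneg ε)]
    apply ENNReal.ofReal_le_ofReal
    rw [← mul_div_assoc, div_le_div_iff₀ hden hden]
    nlinarith [Real.exp_nonneg ε]
  -- pointwise bound on RRvec
  have key : ∀ y, RRvec (φ w) y ≤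
      ENNReal.ofReal (Real.exp (ε * (hammingDist (φ w) (φ w') : ℝ))) * RRvec (φ w') y := by
    intro y
    rw [hRR, hRR]
    have hcoord : ∀ i : Fin n,
        (if φ w i = y i then a else b) ≤
          (if φ w i = φ w' i then 1 else c) * (if φ w' i = y i then a else b) := by
      intro i
      by_cases h : φ w i = φ w' i
      · simp [h]
      · rw [if_neg h]
        by_cases h2 : φ w i = y i
        · have h3 : ¬ (φ w' i = y i) := fun hh => h (h2.trans hh.symm)
          rw [if_pos h2, if_neg h3]; exact hab
        · have h3 : φ w' i = y i := by
            revert h h2; cases φ w i <;> cases φ w' i <;> cases y i <;> simp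
          rw [if_neg h2, if_pos h3]; exact hba
    calc ∏ i : Fin n, (if φ w i = y i then a else b)
        ≤ ∏ i : Fin n, ((if φ w i = φ w' i then 1 else c) * (if φ w' i = y i then a else b)) :=
          Finset.prod_le_prod' fun i _ => hcoord i
      _ = (∏ i : Fin n, (if φ w i = φ w' i then 1 else c)) *
            ∏ i : Fin n, (if φ w' i = y i then a else b) := Finset.prod_mul_distrib
      _ = ENNReal.ofReal (Real.exp (ε * (hammingDist (φ w) (φ w') : ℝ))) *
            ∏ i : Fin n, (if φ w' i = y i then a else b) := by
          congr 1
          have : (∏ i : Fin n, (if φ w i = φ w' i then 1 else c))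
              = c ^ (hammingDist (φ w) (φ w')) := by
            rw [hammingDist, ← Finset.prod_const]
            rw [Finset.prod_filter]
            apply Finset.prod_congr rfl
            intro i _
            by_cases h : φ w i = φ w' i <;> simp [h]
          rw [this, hc, ← ENNReal.ofReal_pow (Real.exp_nonneg ε), ← Real.exp_nat_mul]
          ring_nf
  -- transfer through the map
  rw [hBRR, hBRR, PMF.map_apply, PMF.map_apply, ← ENNReal.tsum_mul_left]
  apply ENNReal.tsum_le_tsum
  intro y
  by_cases h : wHat = nn y
  · simp only [if_pos h]; exact key y
  · simp [h]
end

section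
/- Let n ∈ ℕ, ε ≥ 0, and c > 0. For x ∈ ℝ^n, let μ_x denote the measure on ℝ^n with density z ↦ c · exp(−ε·‖z − x‖) with respect to Lebesgue measure, where ‖·‖ is the Euclidean norm. Then for all x, x' ∈ ℝ^n and every measurable set A ⊆ ℝ^n, μ_x(A) ≤ exp(ε·‖x − x'‖) · μ_{x'}(A). That is, the family of multivariate Laplace noise distributions centered at different points satisfies metric differential privacy with respect to the Euclidean metric (Theorem 1, Madlib, before the nearest-neighbor post-processing step). -/
open MeasureTheory

/-- The family of multivariate Laplace noise measures
μ_x = (c·exp(−ε‖z−x‖)) dz on ℝ^n satisfies metric differential privacy with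
respect to the Euclidean metric: μ_x(A) ≤ exp(ε‖x−x'‖) · μ_{x'}(A). -/
theorem laplace_measures_metric_dp
    (n : ℕ) (ε : ℝ) (hε : 0 ≤ ε) (c : ℝ) (hc : 0 < c)
    (μ : EuclideanSpace ℝ (Fin n) → Measure (EuclideanSpace ℝ (Fin n)))
    (hμ : ∀ x : EuclideanSpace ℝ (Fin n),
      μ x = volume.withDensity
        (fun z => ENNReal.ofReal (c * Real.exp (-(ε * ‖z - x‖))))) :
    ∀ (x x' : EuclideanSpace ℝ (Fin n)) (A : Set (EuclideanSpace ℝ (Fin n))),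
      MeasurableSet A →
      μ x A ≤ ENNReal.ofReal (Real.exp (ε * ‖x - x'‖)) * μ x' A := by
  intro x x' A hA
  rw [hμ x, hμ x', withDensity_apply _ hA, withDensity_apply _ hA,
    ← lintegral_const_mul' _ _ ENNReal.ofReal_ne_top]
  refine setLIntegral_mono' hA fun z _ => ?_
  rw [← ENNReal.ofReal_mul (Real.exp_nonneg _)]
  apply ENNReal.ofReal_le_ofReal
  have h : ‖z - x'‖ ≤ ‖z - x‖ + ‖x - x'‖ := norm_sub_le_norm_sub_add_norm_sub z x x'
  have h2 : Real.exp (-(ε * ‖z - x‖)) ≤ Real.exp (ε * ‖x - x'‖ + -(ε * ‖z - x'‖)) := by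
    apply Real.exp_le_exp.2
    nlinarith [mul_le_mul_of_nonneg_left h hε]
  rw [Real.exp_add] at h2
  nlinarith [Real.exp_pos (-(ε * ‖z - x'‖)), Real.exp_pos (ε * ‖x - x'‖)]
end
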